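/- arXiv:1712.09594 — 7 statements merged into one kernel-verified Lean document; each statement's English description precedes it below -/
import Mathlib

section
/- With X, U_M, ℓ_1,…,ℓ_M, I_M, and the bilinear form ((u,v)) = (u − I_M(u), v − I_M(v)) + (I_M(u), I_M(v)) as above, the bilinear form ((·,·)) is an inner product on X, and the induced norm |||u||| = sqrt(((u,u))) satisfies (1/2)‖u‖² ≤ |||u|||² ≤ (2 + 3‖I_M‖²)‖u‖² for all u ∈ X, where ‖I_M‖ is the operator norm of I_M on X. -/
open RealInnerProductSpace

/-- `((·,·))` is an inner product on `X` and the induced norm satisfies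
`(1/2)‖u‖² ≤ |||u|||² ≤ (2 + 3‖I_M‖²)‖u‖²`. -/
theorem stmt_2 {X : Type*} [NormedAddCommGroup X] [InnerProductSpace ℝ X]
    {M : ℕ} (U : Submodule ℝ X) [FiniteDimensional ℝ U]
    (hU : Module.finrank ℝ U = M)
    (ℓ : Fin M → (X →L[ℝ] ℝ))
    (huni : ∀ ψ ∈ U, (∀ m, ℓ m ψ = 0) → ψ = 0)
    (I : X →L[ℝ] X)
    (hIU : ∀ u : X, I u ∈ U)
    (hI : ∀ (u : X) (m : Fin M), ℓ m (I u) = ℓ m u)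
    (b : X → X → ℝ)
    (hb : ∀ u v : X, b u v = ⟪u - I u, v - I v⟫ + ⟪I u, I v⟫) :
    -- `b` is an inner product on `X`:
    (∀ u v : X, b u v = b v u) ∧
    (∀ (c : ℝ) (u u' v : X), b (c • u + u') v = c * b u v + b u' v) ∧
    (∀ u : X, 0 ≤ b u u) ∧
    (∀ u : X, b u u = 0 → u = 0) ∧
    -- norm equivalence:
    (∀ u : X, (1 / 2 : ℝ) * ‖u‖ ^ 2 ≤ b u u ∧ b u u ≤ (2 + 3 * ‖I‖ ^ 2) * ‖u‖ ^ 2) := by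
  have hbb : ∀ u : X, b u u = ‖u - I u‖ ^ 2 + ‖I u‖ ^ 2 := by
    intro u
    rw [hb, real_inner_self_eq_norm_sq, real_inner_self_eq_norm_sq]
  refine ⟨?_, ?_, ?_, ?_, ?_⟩
  · intro u v; rw [hb, hb, real_inner_comm, real_inner_comm (I u)]
  · intro c u u' v
    simp only [hb, map_add, map_smul]
    have h1 : c • u + u' - (c • I u + I u') = c • (u - I u) + (u' - I u') := by
      module
    rw [h1, inner_add_left, inner_add_left, real_inner_smul_left, real_inner_smul_left]
    ring
  · intro u; rw [hbb]; positivity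
  · intro u h
    rw [hbb] at h
    have h1 : ‖u - I u‖ = 0 := by nlinarith [sq_nonneg ‖u - I u‖, sq_nonneg ‖I u‖, norm_nonneg (u - I u), norm_nonneg (I u)]
    have h2 : ‖I u‖ = 0 := by nlinarith [norm_nonneg (u - I u), norm_nonneg (I u)]
    have e1 : u - I u = 0 := norm_eq_zero.mp h1
    have e2 : I u = 0 := norm_eq_zero.mp h2
    have : u = I u := sub_eq_zero.mp e1
    rw [this, e2]
  · intro u
    rw [hbb]
    have htri : ‖u‖ ≤ ‖u - I u‖ + ‖I u‖ := by
      simpa using norm_add_le (u - I u) (I u)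
    have htri2 : ‖u - I u‖ ≤ ‖u‖ + ‖I u‖ := norm_sub_le u (I u)
    have hop : ‖I u‖ ≤ ‖I‖ * ‖u‖ := I.le_opNorm u
    have h0 := norm_nonneg u
    have h1 := norm_nonneg (u - I u)
    have h2 := norm_nonneg (I u)
    have h3 := norm_nonneg I
    constructor
    · nlinarith [sq_nonneg (‖u - I u‖ - ‖I u‖)]
    · nlinarith [sq_nonneg (‖u‖ - ‖I u‖), mul_le_mul hop hop h2 (by positivity)]
end

section
/- With X, U_M, ℓ_1,…,ℓ_M, I_M, and the inner product ((·,·)) defined via I_M as above, the orthogonal projection of any u ∈ X onto U_M with respect to the inner product ((·,·)) equals the interpolant: Π^{|||·|||}_{U_M} u = I_M(u). -/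
open RealInnerProductSpace

/-- the `((·,·))`-orthogonal projection onto `U_M` equals the interpolant,
i.e. `I_M u ∈ U_M` and `u - I_M u` is `((·,·))`-orthogonal to `U_M`. -/
theorem stmt_6 {X : Type*} [NormedAddCommGroup X] [InnerProductSpace ℝ X]
    {M : ℕ} (U : Submodule ℝ X) [FiniteDimensional ℝ U]
    (hU : Module.finrank ℝ U = M)
    (ℓ : Fin M → (X →L[ℝ] ℝ))
    (huni : ∀ ψ ∈ U, (∀ m, ℓ m ψ = 0) → ψ = 0)
    (I : X →L[ℝ] X)
    (hIU : ∀ u : X, I u ∈ U)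
    (hI : ∀ (u : X) (m : Fin M), ℓ m (I u) = ℓ m u)
    (b : X → X → ℝ)
    (hb : ∀ u v : X, b u v = ⟪u - I u, v - I v⟫ + ⟪I u, I v⟫) :
    ∀ u : X, I u ∈ U ∧ ∀ q ∈ U, b (u - I u) q = 0 := by
  -- I fixes U
  have hfix : ∀ q ∈ U, I q = q := by
    intro q hq
    have h : I q - q = 0 := by
      apply huni _ (U.sub_mem (hIU q) hq)
      intro m
      simp [hI q m]
    exact sub_eq_zero.mp h
  intro u
  refine ⟨hIU u, ?_⟩
  intro q hq
  have hIw : I (u - I u) = 0 := by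
    rw [map_sub, hfix _ (hIU u), sub_self]
  rw [hb, hIw, hfix q hq]
  simp
end

section
/- Let X be a real Hilbert space, Z_N ⊂ X an N-dimensional subspace, ℓ_1,…,ℓ_M ∈ X' continuous linear functionals, ξ > 0, and y ∈ ℝ^M. Then the functional J_ξ(z,η) = ξ‖η‖² + (1/M)Σ_{m=1}^M (ℓ_m(z+η) − y_m)² defined on Z_N × X admits a minimizer, and at any minimizer (z*, η*) the first-order optimality conditions hold: 2ξ(η*, q) + (2/M)Σ_m (ℓ_m(z*+η*) − y_m)ℓ_m(q) = 0 for all q ∈ X, and Σ_m (ℓ_m(z*+η*) − y_m)ℓ_m(p) = 0 for all p ∈ Z_N. -/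
/-!
Write `A x = (ℓ_m x)_m`. Projecting `η` onto `range A† = (ker A)ᗮ` leaves the data term unchanged
and does not increase `‖η‖`, and the data term sees `z ∈ Z` only through `A z`. So it suffices to
minimize over the finite-dimensional space `A(Z) × range A†`, where the objective is continuous
with bounded sublevel sets. The optimality conditions are Fermat's rule for the quadratic
polynomial `t ↦ J(z + t p, η + t q)`.
-/

open RealInnerProductSpace

theorem Continuous.exists_forall_le_of_sublevel_norm_le {V : Type*} [NormedAddCommGroup V]
    [ProperSpace V] {f : V → ℝ} (hf : Continuous f) (x₀ : V) {R : ℝ}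
    (hR : ∀ x, f x < f x₀ → ‖x‖ ≤ R) : ∃ x, ∀ y, f x ≤ f y := by
  refine hf.exists_forall_le' x₀ ?_
  rw [← Metric.cobounded_eq_cocompact]
  filter_upwards [eventually_cobounded_le_norm (R + 1)] with x hx
  by_contra! h
  linarith [hR x h]

section

variable {X E : Type*} [NormedAddCommGroup X] [InnerProductSpace ℝ X]
  [NormedAddCommGroup E] [InnerProductSpace ℝ E]

theorem ContinuousLinearMap.map_starProjection_range_adjoint [CompleteSpace X]
    [FiniteDimensional ℝ E] (A : X →L[ℝ] E) (x : X) :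
    A ((ContinuousLinearMap.adjoint A).range.starProjection x) = A x := by
  have h := (ContinuousLinearMap.adjoint A).range.sub_starProjection_mem_orthogonal x
  rw [(ContinuousLinearMap.adjoint A).orthogonal_range, ContinuousLinearMap.adjoint_adjoint,
    LinearMap.mem_ker, map_sub, sub_eq_zero] at h
  exact h.symm

/-- The paper's `J_ξ` is the case `E = ℝ^M`, `A x = (ℓ_m x)_m`, `μ = 1/M`. -/
def pbdwObjective (ξ μ : ℝ) (A : X →L[ℝ] E) (y : E) (z η : X) : ℝ :=
  ξ * ‖η‖ ^ 2 + μ * ‖A (z + η) - y‖ ^ 2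

theorem hasDerivAt_pbdwObjective_line (ξ μ : ℝ) (A : X →L[ℝ] E) (y : E) (z η p q : X) :
    HasDerivAt (fun t : ℝ => pbdwObjective ξ μ A y (z + t • p) (η + t • q))
      (2 * ξ * ⟪η, q⟫ + 2 * μ * ⟪A (z + η) - y, A (p + q)⟫) 0 := by
  have line : ∀ v w : X, HasDerivAt (fun t : ℝ => v + t • w) w 0 := fun v w => by
    simpa using ((hasDerivAt_id (0 : ℝ)).smul_const w).const_add v
  have residual : HasDerivAt (fun t : ℝ => A (z + t • p + (η + t • q)) - y) (A (p + q)) 0 := by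
    have := (A.hasFDerivAt.comp_hasDerivAt (0 : ℝ) (line (z + η) (p + q))).sub_const y
    convert this using 2 with t
    simp only [Function.comp_apply, smul_add]
    abel_nf
  have h := ((line η q).norm_sq.const_mul ξ).add (residual.norm_sq.const_mul μ)
  simp only [zero_smul, add_zero] at h
  exact h.congr_deriv (by ring)

theorem pbdwObjective_deriv_eq_zero_of_forall_le {ξ μ : ℝ} {A : X →L[ℝ] E} {y : E}
    {Z : Submodule ℝ X} {z η : X} (hz : z ∈ Z)
    (hmin : ∀ z' ∈ Z, ∀ η', pbdwObjective ξ μ A y z η ≤ pbdwObjective ξ μ A y z' η')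
    {p : X} (hp : p ∈ Z) (q : X) :
    2 * ξ * ⟪η, q⟫ + 2 * μ * ⟪A (z + η) - y, A (p + q)⟫ = 0 := by
  refine IsLocalMin.hasDerivAt_eq_zero ?_ (hasDerivAt_pbdwObjective_line ξ μ A y z η p q)
  refine Filter.Eventually.of_forall fun t => ?_
  simpa using hmin _ (Z.add_mem hz (Z.smul_mem t hp)) _

theorem exists_forall_le_regularizedMisfit {ξ μ : ℝ} (hξ : 0 < ξ) (hμ : 0 < μ)
    (A : X →L[ℝ] E) (y : E) (S : Submodule ℝ E) [FiniteDimensional ℝ S]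
    (W : Submodule ℝ X) [FiniteDimensional ℝ W] :
    ∃ s ∈ S, ∃ w ∈ W, ∀ s' ∈ S, ∀ w' ∈ W,
      ξ * ‖w‖ ^ 2 + μ * ‖s + A w - y‖ ^ 2 ≤ ξ * ‖w'‖ ^ 2 + μ * ‖s' + A w' - y‖ ^ 2 := by
  set f : S × W → ℝ := fun p => ξ * ‖(p.2 : X)‖ ^ 2 + μ * ‖(p.1 : E) + A p.2 - y‖ ^ 2
  have hf : Continuous f := by fun_prop
  set R := √(μ * ‖y‖ ^ 2 / ξ)
  have hbounded : ∀ p, f p < f 0 → ‖p‖ ≤ R + 2 * ‖y‖ + ‖A‖ * R := by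
    rintro ⟨s, w⟩ hlt
    have hf0 : f 0 = μ * ‖y‖ ^ 2 := by simp [f]
    simp only [f, hf0] at hlt
    have hw : ‖(w : X)‖ ≤ R := by
      apply Real.le_sqrt_of_sq_le
      rw [le_div_iff₀ hξ]
      nlinarith [sq_nonneg ‖(s : E) + A w - y‖]
    have hres : ‖(s : E) + A w - y‖ ≤ ‖y‖ := by
      refine (pow_le_pow_iff_left₀ (norm_nonneg _) (norm_nonneg _) two_ne_zero).1 ?_
      nlinarith [sq_nonneg ‖(w : X)‖]
    have hs : ‖(s : E)‖ ≤ 2 * ‖y‖ + ‖A‖ * R :=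
      calc ‖(s : E)‖ = ‖((s : E) + A w - y) - A w + y‖ := by abel_nf
        _ ≤ ‖(s : E) + A w - y‖ + ‖A w‖ + ‖y‖ :=
          (norm_add_le _ _).trans (add_le_add_left (norm_sub_le _ _) _)
        _ ≤ ‖y‖ + ‖A‖ * R + ‖y‖ := by gcongr; exact A.le_opNorm_of_le hw
        _ = 2 * ‖y‖ + ‖A‖ * R := by ring
    have hR : 0 ≤ R := Real.sqrt_nonneg _
    rw [norm_prod_le_iff]
    exact ⟨by simp only [Submodule.coe_norm] at hs ⊢; nlinarith [norm_nonneg y],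
      by simp only [Submodule.coe_norm] at hw ⊢; nlinarith [norm_nonneg y, norm_nonneg A]⟩
  obtain ⟨⟨s, w⟩, hmin⟩ := hf.exists_forall_le_of_sublevel_norm_le 0 hbounded
  exact ⟨s, s.2, w, w.2, fun s' hs' w' hw' => hmin (⟨s', hs'⟩, ⟨w', hw'⟩)⟩

theorem exists_forall_le_pbdwObjective [CompleteSpace X] [FiniteDimensional ℝ E] {ξ μ : ℝ}
    (hξ : 0 < ξ) (hμ : 0 < μ) (A : X →L[ℝ] E) (y : E) (Z : Submodule ℝ X)
    [FiniteDimensional ℝ Z] :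
    ∃ z ∈ Z, ∃ η, ∀ z' ∈ Z, ∀ η', pbdwObjective ξ μ A y z η ≤ pbdwObjective ξ μ A y z' η' := by
  set W := (ContinuousLinearMap.adjoint A).range
  obtain ⟨_, ⟨z, hz, rfl⟩, w, -, hmin⟩ :=
    exists_forall_le_regularizedMisfit hξ hμ A y (Z.map (A : X →ₗ[ℝ] E)) W
  refine ⟨z, hz, w, fun z' hz' η' => ?_⟩
  calc pbdwObjective ξ μ A y z w = ξ * ‖w‖ ^ 2 + μ * ‖A z + A w - y‖ ^ 2 := by
        rw [pbdwObjective, map_add]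
    _ ≤ ξ * ‖W.starProjection η'‖ ^ 2 + μ * ‖A z' + A (W.starProjection η') - y‖ ^ 2 :=
        hmin _ (Submodule.mem_map_of_mem hz') _ (W.starProjection_apply_mem η')
    _ ≤ pbdwObjective ξ μ A y z' η' := by
        rw [pbdwObjective, map_add, A.map_starProjection_range_adjoint]
        gcongr
        exact W.norm_starProjection_apply_le η'

end

section

variable {X : Type*} [NormedAddCommGroup X] [InnerProductSpace ℝ X] {ι : Type*}

noncomputable def measurementMap (ℓ : ι → X →L[ℝ] ℝ) : X →L[ℝ] EuclideanSpace ℝ ι :=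
  (EuclideanSpace.equiv ι ℝ).symm.toContinuousLinearMap ∘L ContinuousLinearMap.pi ℓ

@[simp]
theorem measurementMap_apply (ℓ : ι → X →L[ℝ] ℝ) (x : X) (i : ι) :
    measurementMap ℓ x i = ℓ i x := rfl

theorem inner_measurementMap_sub_toLp [Fintype ι] (ℓ : ι → X →L[ℝ] ℝ) (y : ι → ℝ) (x q : X) :
    ⟪measurementMap ℓ x - WithLp.toLp 2 y, measurementMap ℓ q⟫ = ∑ i, (ℓ i x - y i) * ℓ i q := by
  simp [PiLp.inner_apply, mul_comm]

theorem norm_measurementMap_sub_toLp_sq [Fintype ι] (ℓ : ι → X →L[ℝ] ℝ) (y : ι → ℝ) (x : X) :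
    ‖measurementMap ℓ x - WithLp.toLp 2 y‖ ^ 2 = ∑ i, (ℓ i x - y i) ^ 2 := by
  simp [EuclideanSpace.norm_sq_eq]

end

theorem stmt_8_general {X : Type*} [NormedAddCommGroup X] [InnerProductSpace ℝ X] [CompleteSpace X]
    {M : ℕ} (Z : Submodule ℝ X) [FiniteDimensional ℝ Z]
    (ℓ : Fin M → (X →L[ℝ] ℝ)) (y : Fin M → ℝ)
    (ξ : ℝ) (hξ : 0 < ξ) (hM : 0 < M)
    (J : X → X → ℝ)
    (hJ : ∀ z η : X,
      J z η = ξ * ‖η‖ ^ 2 + (1 / (M : ℝ)) * ∑ m : Fin M, (ℓ m (z + η) - y m) ^ 2) :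
    (∃ zs ∈ Z, ∃ ηs : X, ∀ z ∈ Z, ∀ η : X, J zs ηs ≤ J z η) ∧
    (∀ zs ∈ Z, ∀ ηs : X, (∀ z ∈ Z, ∀ η : X, J zs ηs ≤ J z η) →
      (∀ q : X,
        2 * ξ * ⟪ηs, q⟫ +
          (2 / (M : ℝ)) * ∑ m : Fin M, (ℓ m (zs + ηs) - y m) * ℓ m q = 0) ∧
      (∀ p ∈ Z, ∑ m : Fin M, (ℓ m (zs + ηs) - y m) * ℓ m p = 0)) := by
  have hJ_eq : J = pbdwObjective ξ (1 / M) (measurementMap ℓ) (WithLp.toLp 2 y) := by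
    ext z η
    rw [hJ, pbdwObjective, norm_measurementMap_sub_toLp_sq]
  subst hJ_eq
  have hμ : (0 : ℝ) < 1 / M := by positivity
  refine ⟨exists_forall_le_pbdwObjective hξ hμ _ _ Z,
    fun zs hzs ηs hmin => ⟨fun q => ?_, fun p hp => ?_⟩⟩
  · have h := pbdwObjective_deriv_eq_zero_of_forall_le hzs hmin Z.zero_mem q
    rwa [zero_add, inner_measurementMap_sub_toLp, mul_one_div] at h
  · have h := pbdwObjective_deriv_eq_zero_of_forall_le hzs hmin hp 0
    rw [add_zero, inner_zero_right, mul_zero, zero_add, inner_measurementMap_sub_toLp] at h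
    exact (mul_eq_zero.1 h).resolve_left (by positivity)

/-- the regularized PBDW functional `J_ξ` admits a minimizer over `Z_N × X`, and
any minimizer satisfies the first-order optimality conditions. -/
theorem stmt_8 {X : Type*} [NormedAddCommGroup X] [InnerProductSpace ℝ X] [CompleteSpace X]
    {N M : ℕ} (Z : Submodule ℝ X) [FiniteDimensional ℝ Z]
    (hZ : Module.finrank ℝ Z = N)
    (ℓ : Fin M → (X →L[ℝ] ℝ)) (y : Fin M → ℝ)
    (ξ : ℝ) (hξ : 0 < ξ) (hM : 0 < M)
    (J : X → X → ℝ)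
    (hJ : ∀ z η : X,
      J z η = ξ * ‖η‖ ^ 2 + (1 / (M : ℝ)) * ∑ m : Fin M, (ℓ m (z + η) - y m) ^ 2) :
    (∃ zs ∈ Z, ∃ ηs : X, ∀ z ∈ Z, ∀ η : X, J zs ηs ≤ J z η) ∧
    (∀ zs ∈ Z, ∀ ηs : X, (∀ z ∈ Z, ∀ η : X, J zs ηs ≤ J z η) →
      (∀ q : X,
        2 * ξ * ⟪ηs, q⟫ +
          (2 / (M : ℝ)) * ∑ m : Fin M, (ℓ m (zs + ηs) - y m) * ℓ m q = 0) ∧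
      (∀ p ∈ Z, ∑ m : Fin M, (ℓ m (zs + ηs) - y m) * ℓ m p = 0)) :=
  stmt_8_general Z ℓ y ξ hξ hM J hJ
end

section
/- Let X be a real Hilbert space, Z_N ⊂ X an N-dimensional subspace, U_M ⊂ X an M-dimensional subspace, and let Π denote orthogonal projection onto U_M. Suppose the constrained problem min{‖η‖ : (z,η) ∈ Z_N × U_M, ℓ_m(z+η) = y_m for m=1,…,M} has a solution (z*, η*) and the inf-sup constant β_{N,M} = inf_{z∈Z_N} sup_{q∈U_M} (z,q)/(‖z‖ ‖q‖) is strictly positive. Then η* is orthogonal to Z_N: (η*, p) = 0 for all p ∈ Z_N. -/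
/-!
Moving the background component by `-t • p` with `p ∈ Z_N` and the update by `t • Π p` keeps the
data unchanged, because every `ℓ_m` has its Riesz representer in `U_M` and so vanishes on
`p - Π p ∈ U_Mᗮ`. Minimality of `‖η*‖` along this line forces `⟪η*, Π p⟫ = 0`, while
`⟪η*, p - Π p⟫ = 0` because `η* ∈ U_M`.
-/

open RealInnerProductSpace

section

variable {F : Type*} [NormedAddCommGroup F] [InnerProductSpace ℝ F]

theorem inner_eq_zero_of_forall_norm_le_norm_add_smul {x v : F}
    (h : ∀ t : ℝ, ‖x‖ ≤ ‖x + t • v‖) : ⟪x, v⟫ = 0 := by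
  have hquad : ∀ t : ℝ, 0 ≤ ‖v‖ ^ 2 * (t * t) + 2 * ⟪x, v⟫ * t + 0 := by
    intro t
    have hsq := pow_le_pow_left₀ (norm_nonneg x) (h t) 2
    rw [norm_add_sq_real, inner_smul_right, norm_smul, mul_pow, Real.norm_eq_abs, sq_abs] at hsq
    nlinarith
  have hdisc := discrim_le_zero hquad
  rw [discrim] at hdisc
  nlinarith [sq_nonneg ⟪x, v⟫]

theorem apply_eq_zero_of_toDual_symm_mem_of_mem_orthogonal [CompleteSpace F]
    {U : Submodule ℝ F} {ℓ : F →L[ℝ] ℝ} (hℓ : (InnerProductSpace.toDual ℝ F).symm ℓ ∈ U)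
    {x : F} (hx : x ∈ Uᗮ) : ℓ x = 0 := by
  rw [← InnerProductSpace.toDual_symm_apply]
  exact Submodule.inner_right_of_mem_orthogonal hℓ hx

end

theorem stmt_10_general {X : Type*} [NormedAddCommGroup X] [InnerProductSpace ℝ X] [CompleteSpace X]
    {M : ℕ} (Z U : Submodule ℝ X)
    [FiniteDimensional ℝ U]
    (ℓ : Fin M → (X →L[ℝ] ℝ))
    (hU : U = Submodule.span ℝ
      (Set.range fun m => (InnerProductSpace.toDual ℝ X).symm (ℓ m)))
    (y : Fin M → ℝ)
    (zs ηs : X) (hzs : zs ∈ Z) (hηs : ηs ∈ U)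
    (hfeas : ∀ m, ℓ m (zs + ηs) = y m)
    (hmin : ∀ z ∈ Z, ∀ η ∈ U, (∀ m, ℓ m (z + η) = y m) → ‖ηs‖ ≤ ‖η‖) :
    ∀ p ∈ Z, ⟪ηs, p⟫ = 0 := by
  intro p hp
  set q := U.starProjection p
  have hperp : p - q ∈ Uᗮ := Submodule.sub_starProjection_mem_orthogonal p
  have hℓ : ∀ m, ℓ m (p - q) = 0 := fun m =>
    apply_eq_zero_of_toDual_symm_mem_of_mem_orthogonal (hU ▸ Submodule.subset_span ⟨m, rfl⟩) hperp
  have hq : ⟪ηs, q⟫ = 0 := by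
    refine inner_eq_zero_of_forall_norm_le_norm_add_smul fun t => hmin (zs - t • p)
      (Z.sub_mem hzs (Z.smul_mem t hp)) (ηs + t • q) (U.add_mem hηs (U.smul_mem t (by simp [q])))
      fun m => ?_
    have hshift : zs - t • p + (ηs + t • q) = zs + ηs - t • (p - q) := by
      rw [smul_sub]; abel
    rw [hshift, map_sub, map_smul, hℓ, smul_zero, sub_zero, hfeas]
  calc ⟪ηs, p⟫ = ⟪ηs, p - q⟫ + ⟪ηs, q⟫ := by rw [inner_sub_right]; ring
    _ = 0 := by rw [Submodule.inner_right_of_mem_orthogonal hηs hperp, hq, add_zero]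

/-- at a solution of the noise-free constrained PBDW problem with positive
inf-sup constant, the update `η*` is orthogonal to the background space `Z_N`. -/
theorem stmt_10 {X : Type*} [NormedAddCommGroup X] [InnerProductSpace ℝ X] [CompleteSpace X]
    {N M : ℕ} (Z U : Submodule ℝ X)
    [FiniteDimensional ℝ Z] [FiniteDimensional ℝ U]
    (hZ : Module.finrank ℝ Z = N) (hUdim : Module.finrank ℝ U = M)
    (ℓ : Fin M → (X →L[ℝ] ℝ))
    (hU : U = Submodule.span ℝ
      (Set.range fun m => (InnerProductSpace.toDual ℝ X).symm (ℓ m)))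
    (y : Fin M → ℝ)
    (β : ℝ) (hβ : 0 < β)
    (hinfsup : ∀ z ∈ Z, z ≠ 0 → ∃ q ∈ U, q ≠ 0 ∧ β * (‖z‖ * ‖q‖) ≤ ⟪z, q⟫)
    (zs ηs : X) (hzs : zs ∈ Z) (hηs : ηs ∈ U)
    (hfeas : ∀ m, ℓ m (zs + ηs) = y m)
    (hmin : ∀ z ∈ Z, ∀ η ∈ U, (∀ m, ℓ m (z + η) = y m) → ‖ηs‖ ≤ ‖η‖) :
    ∀ p ∈ Z, ⟪ηs, p⟫ = 0 :=
  stmt_10_general Z U ℓ hU y zs ηs hzs hηs hfeas hmin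
end

section
/- Under the same setting, suppose additionally that e = [ε; 0] with ε ∈ ℝ^M having independent components with mean zero and variance σ². Then E[‖u*_ξ − u^opt‖₂²] ≤ (ξM ‖η̃^opt‖₂ / s_min(A(ξ)))² + σ² trace(A(ξ)^{-1} Σ A(ξ)^{-T}), where Σ = [[I_M, 0],[0, 0]]. -/
/-!
Inverting `A(ξ)` splits the error into a deterministic and a random part,
`u*_ξ - u^opt = A⁻¹ [ε; 0] - ξM A⁻¹ [η̃^opt; 0]`. Coordinatewise the random part is a fixed
linear combination of the independent centred `ε_m`, so its second moment is `σ²` times the sum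
of the squared coefficients; summed over the coordinates this is `σ² ‖A⁻¹ Σ^{1/2}‖_F²
= σ² trace(A⁻¹ Σ A⁻ᵀ)`. The bias `ξM A⁻¹ [η̃^opt; 0]` is bounded through the lower bound
`s_min ‖v‖ ≤ ‖A v‖` applied to `v = A⁻¹ w`.
-/

open Matrix MeasureTheory ProbabilityTheory

section Noise

variable {Ω ι : Type*} [MeasurableSpace Ω] {μ : Measure Ω} [Fintype ι] {X : ι → Ω → ℝ}

lemma memLp_sum_mul [IsFiniteMeasure μ] (hX : ∀ m, MemLp (X m) 2 μ) (c : ι → ℝ) :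
    MemLp (fun ω => ∑ m, c m * X m ω) 2 μ :=
  memLp_finsetSum _ fun m _ => (hX m).const_mul (c m)

lemma variance_sum_mul_of_iIndepFun (hindep : iIndepFun X μ) (hX : ∀ m, MemLp (X m) 2 μ)
    {σ : ℝ} (hvar : ∀ m, Var[X m; μ] = σ ^ 2) (c : ι → ℝ) :
    Var[fun ω => ∑ m, c m * X m ω; μ] = σ ^ 2 * ∑ m, c m ^ 2 := by
  have hsum : (fun ω => ∑ m, c m * X m ω) = ∑ m, fun ω => c m * X m ω := by
    ext ω; simp
  rw [hsum, IndepFun.variance_sum (fun m _ => (hX m).const_mul (c m))]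
  · simp only [variance_const_mul, hvar, Finset.mul_sum]
    exact Finset.sum_congr rfl fun m _ => mul_comm _ _
  · intro m _ n _ hmn
    exact (hindep.indepFun hmn).comp (measurable_const_mul (c m)) (measurable_const_mul (c n))

lemma integral_sq_sum_mul_sub_of_iIndepFun [IsProbabilityMeasure μ] (hindep : iIndepFun X μ)
    (hX : ∀ m, MemLp (X m) 2 μ) (hmean : ∀ m, μ[X m] = 0) {σ : ℝ}
    (hvar : ∀ m, ∫ ω, X m ω ^ 2 ∂μ = σ ^ 2) (c : ι → ℝ) (b : ℝ) :
    ∫ ω, (∑ m, c m * X m ω - b) ^ 2 ∂μ = σ ^ 2 * ∑ m, c m ^ 2 + b ^ 2 := by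
  have hS := memLp_sum_mul hX c
  have hvarX : ∀ m, Var[X m; μ] = σ ^ 2 := fun m => by
    rw [variance_of_integral_eq_zero (hX m).aemeasurable (hmean m), hvar m]
  have hmean_sub : ∫ ω, (∑ m, c m * X m ω - b) ∂μ = -b := by
    rw [integral_sub (hS.integrable one_le_two) (integrable_const b),
      integral_finsetSum _ fun m _ => ((hX m).integrable one_le_two).const_mul (c m)]
    simp [integral_const_mul, hmean]
  have hS_sub : MemLp (fun ω => ∑ m, c m * X m ω - b) 2 μ := hS.sub (memLp_const b)
  have hvar_sub := variance_eq_sub hS_sub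
  rw [variance_sub_const hS.aestronglyMeasurable b,
    variance_sum_mul_of_iIndepFun hindep hX hvarX c] at hvar_sub
  simp only [Pi.pow_apply, hmean_sub] at hvar_sub
  linarith

end Noise

section LinearAlgebra

variable {R n m k : Type*} [Fintype m] [Fintype k]

lemma sub_eq_inv_mulVec_sub_of_mulVec_eq [Fintype n] [DecidableEq n] [CommRing R]
    {A : Matrix n n R} (hA : IsUnit A) {x y d e : n → R} (h : A *ᵥ x = A *ᵥ y - d + e) :
    x - y = A⁻¹ *ᵥ e - A⁻¹ *ᵥ d := by
  have hAxy : A *ᵥ (x - y) = e - d := by rw [mulVec_sub, h]; abel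
  rw [← mulVec_sub, ← hAxy, mulVec_mulVec, nonsing_inv_mul A ((isUnit_iff_isUnit_det A).mp hA),
    one_mulVec]

lemma mulVec_sumElim_zero [Semiring R] (B : Matrix n (m ⊕ k) R) (v : m → R) :
    B *ᵥ Sum.elim v 0 = B.toCols₁ *ᵥ v := by
  rw [← fromCols_toCols B, fromCols_mulVec_sumElim]
  simp

lemma mul_fromBlocks_one_zero_mul_transpose [CommSemiring R] [DecidableEq m]
    (B : Matrix n (m ⊕ k) R) :
    B * fromBlocks (1 : Matrix m m R) 0 0 (0 : Matrix k k R) * Bᵀ = B.toCols₁ * B.toCols₁ᵀ := by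
  conv_lhs => rw [← fromCols_toCols B]
  rw [fromCols_mul_fromBlocks, transpose_fromCols, fromCols_mul_fromRows]
  simp

lemma trace_mul_transpose_self [Fintype n] [CommSemiring R] (P : Matrix n m R) :
    (P * Pᵀ).trace = ∑ i, ∑ j, P i j ^ 2 := by
  simp [trace, mul_apply, sq]

lemma sum_sq_inv_mulVec_le [Fintype n] [DecidableEq n] {A : Matrix n n ℝ} (hA : IsUnit A)
    {s : ℝ} (hs0 : 0 < s)
    (hs : ∀ v : n → ℝ, s * √(∑ i, v i ^ 2) ≤ √(∑ i, (A *ᵥ v) i ^ 2)) (w : n → ℝ) :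
    ∑ i, (A⁻¹ *ᵥ w) i ^ 2 ≤ (√(∑ i, w i ^ 2) / s) ^ 2 := by
  have hw := hs (A⁻¹ *ᵥ w)
  rw [mulVec_mulVec, mul_nonsing_inv A ((isUnit_iff_isUnit_det A).mp hA), one_mulVec] at hw
  rw [← Real.sq_sqrt (Finset.sum_nonneg fun i _ => sq_nonneg ((A⁻¹ *ᵥ w) i))]
  gcongr
  rwa [le_div_iff₀ hs0, mul_comm]

end LinearAlgebra

theorem stmt_15_general {M N : ℕ} {Ω : Type*} [MeasurableSpace Ω]
    (μ : Measure Ω) [IsProbabilityMeasure μ]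
    (A : Matrix (Fin M ⊕ Fin N) (Fin M ⊕ Fin N) ℝ) (hA : IsUnit A)
    (ξ : ℝ)
    (uopt : (Fin M ⊕ Fin N) → ℝ) (ηopt : Fin M → ℝ)
    (σ : ℝ)
    (ε : Ω → Fin M → ℝ)
    (hindep : iIndepFun (m := fun _ : Fin M => (inferInstance : MeasurableSpace ℝ))
      (fun m ω => ε ω m) μ)
    (hInt : ∀ m, Integrable (fun ω => ε ω m) μ)
    (hInt2 : ∀ m, Integrable (fun ω => (ε ω m) ^ 2) μ)
    (hmean : ∀ m, ∫ ω, ε ω m ∂μ = 0)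
    (hvar : ∀ m, ∫ ω, (ε ω m) ^ 2 ∂μ = σ ^ 2)
    (ustar : Ω → (Fin M ⊕ Fin N) → ℝ)
    (heq : ∀ ω, A.mulVec (ustar ω) =
      A.mulVec uopt - (ξ * (M : ℝ)) • Sum.elim ηopt (fun _ => (0 : ℝ)) +
        Sum.elim (ε ω) (fun _ => (0 : ℝ)))
    (smin : ℝ) (hsmin : 0 < smin)
    (hs : ∀ v : (Fin M ⊕ Fin N) → ℝ,
      smin * Real.sqrt (∑ i, v i ^ 2) ≤ Real.sqrt (∑ i, A.mulVec v i ^ 2)) :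
    ∫ ω, ∑ i, (ustar ω i - uopt i) ^ 2 ∂μ ≤
      (ξ * (M : ℝ) * Real.sqrt (∑ m, ηopt m ^ 2) / smin) ^ 2 +
        σ ^ 2 * (A⁻¹ * Matrix.fromBlocks (1 : Matrix (Fin M) (Fin M) ℝ) 0 0
          (0 : Matrix (Fin N) (Fin N) ℝ) * A⁻¹ᵀ).trace := by
  set η : Fin M ⊕ Fin N → ℝ := Sum.elim ηopt (fun _ => 0)
  set P := (A⁻¹).toCols₁
  set b := A⁻¹ *ᵥ ((ξ * M) • η)
  have herr : ∀ ω i, ustar ω i - uopt i = ∑ m, P i m * ε ω m - b i := fun ω i => by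
    have := congrFun (sub_eq_inv_mulVec_sub_of_mulVec_eq hA (heq ω)) i
    rwa [Pi.sub_apply, Pi.sub_apply, ← Pi.zero_def, mulVec_sumElim_zero] at this
  have hL2 : ∀ m, MemLp (fun ω => ε ω m) 2 μ := fun m =>
    (memLp_two_iff_integrable_sq (hInt m).1).2 (hInt2 m)
  have hmse : ∫ ω, ∑ i, (ustar ω i - uopt i) ^ 2 ∂μ =
      σ ^ 2 * (A⁻¹ * fromBlocks (1 : Matrix (Fin M) (Fin M) ℝ) 0 0 (0 : Matrix (Fin N) (Fin N) ℝ)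
        * A⁻¹ᵀ).trace + ∑ i, b i ^ 2 := by
    have hint : ∀ i, Integrable (fun ω => (∑ m, P i m * ε ω m - b i) ^ 2) μ := fun i =>
      ((memLp_sum_mul hL2 (P i)).sub (memLp_const (b i))).integrable_sq
    simp_rw [herr]
    rw [integral_finsetSum _ fun i _ => hint i]
    simp_rw [integral_sq_sum_mul_sub_of_iIndepFun hindep hL2 hmean hvar]
    rw [mul_fromBlocks_one_zero_mul_transpose, trace_mul_transpose_self, Finset.sum_add_distrib,
      Finset.mul_sum]
  have hbias : ∑ i, b i ^ 2 ≤ (ξ * M * √(∑ m, ηopt m ^ 2) / smin) ^ 2 := by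
    refine (sum_sq_inv_mulVec_le hA hsmin hs _).trans_eq ?_
    have hη : ∑ i, ((ξ * M) • η) i ^ 2 = (ξ * M) ^ 2 * ∑ m, ηopt m ^ 2 := by
      simp [η, Fintype.sum_sum_type, mul_pow, Finset.mul_sum]
    rw [hη, div_pow, div_pow, mul_pow (ξ * M : ℝ), Real.sq_sqrt (by positivity),
      Real.sq_sqrt (by positivity)]
  linarith

/-- mean-squared-error bound for the regularized PBDW estimator:
`E‖u*_ξ − u^opt‖₂² ≤ (ξM‖η̃^opt‖₂/s_min)² + σ² trace(A⁻¹ Σ A⁻ᵀ)`. -/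
theorem stmt_15 {M N : ℕ} {Ω : Type*} [MeasurableSpace Ω]
    (μ : Measure Ω) [IsProbabilityMeasure μ]
    (A : Matrix (Fin M ⊕ Fin N) (Fin M ⊕ Fin N) ℝ) (hA : IsUnit A)
    (ξ : ℝ) (hξ : 0 < ξ) (hM : 0 < M)
    (uopt : (Fin M ⊕ Fin N) → ℝ) (ηopt : Fin M → ℝ)
    (σ : ℝ)
    (ε : Ω → Fin M → ℝ)
    (hmeas : ∀ m, Measurable fun ω => ε ω m)
    (hindep : iIndepFun (m := fun _ : Fin M => (inferInstance : MeasurableSpace ℝ))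
      (fun m ω => ε ω m) μ)
    (hInt : ∀ m, Integrable (fun ω => ε ω m) μ)
    (hInt2 : ∀ m, Integrable (fun ω => (ε ω m) ^ 2) μ)
    (hmean : ∀ m, ∫ ω, ε ω m ∂μ = 0)
    (hvar : ∀ m, ∫ ω, (ε ω m) ^ 2 ∂μ = σ ^ 2)
    (ustar : Ω → (Fin M ⊕ Fin N) → ℝ)
    (heq : ∀ ω, A.mulVec (ustar ω) =
      A.mulVec uopt - (ξ * (M : ℝ)) • Sum.elim ηopt (fun _ => (0 : ℝ)) +
        Sum.elim (ε ω) (fun _ => (0 : ℝ)))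
    (smin : ℝ) (hsmin : 0 < smin)
    (hs : ∀ v : (Fin M ⊕ Fin N) → ℝ,
      smin * Real.sqrt (∑ i, v i ^ 2) ≤ Real.sqrt (∑ i, A.mulVec v i ^ 2)) :
    ∫ ω, ∑ i, (ustar ω i - uopt i) ^ 2 ∂μ ≤
      (ξ * (M : ℝ) * Real.sqrt (∑ m, ηopt m ^ 2) / smin) ^ 2 +
        σ ^ 2 * (A⁻¹ * Matrix.fromBlocks (1 : Matrix (Fin M) (Fin M) ℝ) 0 0
          (0 : Matrix (Fin N) (Fin N) ℝ) * A⁻¹ᵀ).trace :=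
  stmt_15_general μ A hA ξ uopt ηopt σ ε hindep hInt hInt2 hmean hvar ustar heq smin hsmin hs
end

section
/- Let ξ > 0, L_η ∈ ℝ^{M×M} invertible, L_z ∈ ℝ^{M×N}, and y ∈ ℝ^M. A pair (z*, η*) ∈ ℝ^N × ℝ^M minimizes F(z,η) = ξ‖η‖₂² + (1/M)‖L_η η + L_z z − y‖₂² if and only if, setting η̃* = L_η^{-T} η*, the pair (η̃*, z*) solves the linear system (ξM·I + L_η L_η^T)η̃* + L_z z* = y and L_z^T η̃* = 0, with η* = L_η^T η̃*. -/
open Matrix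

/-- the pair `(z*, η*)` minimizes the discrete regularized PBDW objective iff
`η̃* = L_η⁻ᵀ η*` together with `z*` solves the saddle-point linear system. -/
theorem stmt_16 {M N : ℕ}
    (ξ : ℝ) (hξ : 0 < ξ) (hM : 0 < M)
    (Lη : Matrix (Fin M) (Fin M) ℝ) (hLη : IsUnit Lη)
    (Lz : Matrix (Fin M) (Fin N) ℝ) (y : Fin M → ℝ)
    (F : (Fin N → ℝ) → (Fin M → ℝ) → ℝ)
    (hF : ∀ z η, F z η = ξ * ∑ m, (η m) ^ 2 +
      (1 / (M : ℝ)) * ∑ m, (Lη.mulVec η m + Lz.mulVec z m - y m) ^ 2)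
    (zs : Fin N → ℝ) (ηs : Fin M → ℝ) :
    (∀ (z : Fin N → ℝ) (η : Fin M → ℝ), F zs ηs ≤ F z η) ↔
    ((((ξ * (M : ℝ)) • (1 : Matrix (Fin M) (Fin M) ℝ) + Lη * Lηᵀ).mulVec
        ((Lηᵀ)⁻¹.mulVec ηs) + Lz.mulVec zs = y) ∧
      Lzᵀ.mulVec ((Lηᵀ)⁻¹.mulVec ηs) = 0) := by
  have hM' : (0:ℝ) < (M:ℝ) := by exact_mod_cast hM
  have hMne : (M:ℝ) ≠ 0 := ne_of_gt hM'
  have hc : ξ * (M:ℝ) ≠ 0 := by positivity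
  have hdetT : IsUnit Lηᵀ.det := by
    rw [Matrix.det_transpose]; exact (Matrix.isUnit_iff_isUnit_det Lη).1 hLη
  have dotselfM : ∀ (v : Fin M → ℝ), 0 ≤ v ⬝ᵥ v := fun v =>
    Finset.sum_nonneg fun i _ => mul_self_nonneg _
  have aux : ∀ a b : ℝ, 0 ≤ a → (∀ t : ℝ, 0 ≤ a * t ^ 2 + b * t) → b = 0 := by
    intro a b ha h
    by_contra hb
    have ha1 : (0:ℝ) < a + 1 := by linarith
    have h1 := h (-b / (a + 1))
    have key : a * (-b / (a + 1)) ^ 2 + b * (-b / (a + 1)) = -(b ^ 2 * (1 / (a + 1) ^ 2)) := by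
      field_simp; ring
    rw [key] at h1
    have hbp : 0 < b ^ 2 := lt_of_le_of_ne (sq_nonneg b) (Ne.symm (pow_ne_zero 2 hb))
    have hp : 0 < (1:ℝ) / (a + 1) ^ 2 := by positivity
    nlinarith [mul_pos hbp hp]
  set rs : Fin M → ℝ := Lη.mulVec ηs + Lz.mulVec zs - y with hrsdef
  set w : Fin M → ℝ := (Lηᵀ)⁻¹.mulVec ηs with hwdef
  have hw : Lηᵀ.mulVec w = ηs := by
    rw [hwdef, Matrix.mulVec_mulVec, Matrix.mul_nonsing_inv _ hdetT, Matrix.one_mulVec]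
  -- sum-to-dotProduct conversions
  have hsum1 : ∀ (v : Fin M → ℝ), ∑ m, v m ^ 2 = v ⬝ᵥ v := by
    intro v; simp [dotProduct, pow_two]
  have hsum2 : ∀ (u v yv : Fin M → ℝ),
      ∑ m, (u m + v m - yv m) ^ 2 = (u + v - yv) ⬝ᵥ (u + v - yv) := by
    intro u v yv; simp [dotProduct, pow_two]
  -- key expansion
  have expand : ∀ (z : Fin N → ℝ) (η : Fin M → ℝ), F z η = F zs ηs
      + (ξ * ((η - ηs) ⬝ᵥ (η - ηs))
      + (1 / (M:ℝ)) * ((Lη.mulVec (η - ηs) + Lz.mulVec (z - zs)) ⬝ᵥ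
          (Lη.mulVec (η - ηs) + Lz.mulVec (z - zs)))
      + (2 / (M:ℝ)) * (((ξ * (M:ℝ)) • ηs + Lηᵀ.mulVec rs) ⬝ᵥ (η - ηs))
      + (2 / (M:ℝ)) * ((Lzᵀ.mulVec rs) ⬝ᵥ (z - zs))) := by
    intro z η
    rw [hF z η, hF zs ηs, hsum1 η, hsum1 ηs, hsum2, hsum2, ← hrsdef]
    have hr : Lη.mulVec η + Lz.mulVec z - y
        = rs + (Lη.mulVec (η - ηs) + Lz.mulVec (z - zs)) := by
      rw [hrsdef]; simp only [Matrix.mulVec_sub]; abel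
    rw [hr]
    set a := η - ηs with hadef
    set b := z - zs with hbdef
    set d := Lη.mulVec a + Lz.mulVec b with hddef
    have hηexp : η ⬝ᵥ η = ηs ⬝ᵥ ηs + 2 * (ηs ⬝ᵥ a) + a ⬝ᵥ a := by
      have hη : η = ηs + a := by rw [hadef]; abel
      rw [hη]
      simp only [dotProduct_add, add_dotProduct]
      rw [dotProduct_comm a ηs]; ring
    have hrr : (rs + d) ⬝ᵥ (rs + d) = rs ⬝ᵥ rs + 2 * (rs ⬝ᵥ d) + d ⬝ᵥ d := by
      simp only [dotProduct_add, add_dotProduct]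
      rw [dotProduct_comm d rs]; ring
    have hrd : rs ⬝ᵥ d = (Lηᵀ.mulVec rs) ⬝ᵥ a + (Lzᵀ.mulVec rs) ⬝ᵥ b := by
      rw [hddef, dotProduct_add, dotProduct_mulVec, dotProduct_mulVec,
        mulVec_transpose, mulVec_transpose]
    rw [hηexp, hrr, hrd]
    simp only [add_dotProduct, smul_dotProduct, smul_eq_mul]
    field_simp
    ring
  -- equivalence with the first-order conditions
  have hA : (∀ (z : Fin N → ℝ) (η : Fin M → ℝ), F zs ηs ≤ F z η) ↔
      ((ξ * (M:ℝ)) • ηs + Lηᵀ.mulVec rs = 0 ∧ Lzᵀ.mulVec rs = 0) := by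
    constructor
    · intro h
      constructor
      · funext i
        set e : Fin M → ℝ := Pi.single i 1 with hedef
        have ht : ∀ t : ℝ, 0 ≤ (ξ * (e ⬝ᵥ e) + (1 / (M:ℝ)) * ((Lη.mulVec e) ⬝ᵥ (Lη.mulVec e))) * t ^ 2
            + ((2 / (M:ℝ)) * (((ξ * (M:ℝ)) • ηs + Lηᵀ.mulVec rs) i)) * t := by
          intro t
          have h1 := h zs (ηs + t • e)
          rw [expand zs (ηs + t • e)] at h1
          have h2 := (le_add_iff_nonneg_right _).1 h1
          simp only [add_sub_cancel_left, sub_self, Matrix.mulVec_zero, add_zero,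
            Matrix.mulVec_smul, smul_dotProduct, dotProduct_smul, smul_eq_mul,
            dotProduct_zero, mul_zero] at h2
          have he : (((ξ * (M:ℝ)) • ηs + Lηᵀ.mulVec rs) ⬝ᵥ e)
              = (((ξ * (M:ℝ)) • ηs + Lηᵀ.mulVec rs) i) := by
            rw [hedef, dotProduct_single, mul_one]
          rw [he] at h2
          linarith [h2]
        have hb := aux _ _ (add_nonneg (mul_nonneg hξ.le (dotselfM e))
          (mul_nonneg (by positivity) (dotselfM _))) ht
        rcases mul_eq_zero.1 hb with h0 | h0
        · exact absurd h0 (by positivity : (0:ℝ) < 2 / (M:ℝ)).ne'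
        · simpa using h0
      · funext i
        set e : Fin N → ℝ := Pi.single i 1 with hedef
        have ht : ∀ t : ℝ, 0 ≤ ((1 / (M:ℝ)) * ((Lz.mulVec e) ⬝ᵥ (Lz.mulVec e))) * t ^ 2
            + ((2 / (M:ℝ)) * ((Lzᵀ.mulVec rs) i)) * t := by
          intro t
          have h1 := h (zs + t • e) ηs
          rw [expand (zs + t • e) ηs] at h1
          have h2 := (le_add_iff_nonneg_right _).1 h1
          simp only [add_sub_cancel_left, sub_self, Matrix.mulVec_zero, zero_add, add_zero,
            Matrix.mulVec_smul, smul_dotProduct, dotProduct_smul, smul_eq_mul,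
            dotProduct_zero, mul_zero, zero_dotProduct] at h2
          have he : ((Lzᵀ.mulVec rs) ⬝ᵥ e) = ((Lzᵀ.mulVec rs) i) := by
            rw [hedef, dotProduct_single, mul_one]
          rw [he] at h2
          linarith [h2]
        have hb := aux _ _ (mul_nonneg (by positivity) (dotselfM _)) ht
        rcases mul_eq_zero.1 hb with h0 | h0
        · exact absurd h0 (by positivity : (0:ℝ) < 2 / (M:ℝ)).ne'
        · simpa using h0
    · rintro ⟨h1, h2⟩ z η
      rw [expand z η, h1, h2]
      simp only [zero_dotProduct, mul_zero, add_zero]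
      have := dotselfM (η - ηs)
      have := dotselfM (Lη.mulVec (η - ηs) + Lz.mulVec (z - zs))
      nlinarith [mul_nonneg hξ.le (dotselfM (η - ηs)),
        mul_nonneg (le_of_lt (by positivity : (0:ℝ) < 1 / (M:ℝ)))
          (dotselfM (Lη.mulVec (η - ηs) + Lz.mulVec (z - zs)))]
  rw [hA]
  -- now relate the first-order conditions to the linear system
  have step1 : (((ξ * (M : ℝ)) • (1 : Matrix (Fin M) (Fin M) ℝ) + Lη * Lηᵀ).mulVec w
      + Lz.mulVec zs = y) ↔ (ξ * (M:ℝ)) • w + rs = 0 := by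
    rw [Matrix.add_mulVec, Matrix.smul_mulVec, Matrix.one_mulVec,
      ← Matrix.mulVec_mulVec, hw, hrsdef]
    constructor
    · intro h
      have : (ξ * (M:ℝ)) • w + (Lη.mulVec ηs + Lz.mulVec zs - y) + y = y := by
        rw [← h]; abel
      calc (ξ * (M:ℝ)) • w + (Lη.mulVec ηs + Lz.mulVec zs - y)
          = (ξ * (M:ℝ)) • w + (Lη.mulVec ηs + Lz.mulVec zs - y) + y - y := by abel
        _ = y - y := by rw [this]
        _ = 0 := sub_self y
    · intro h
      have : (ξ * (M:ℝ)) • w + Lη.mulVec ηs + Lz.mulVec zs - y = 0 := by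
        rw [← h]; abel
      calc (ξ * (M:ℝ)) • w + Lη.mulVec ηs + Lz.mulVec zs
          = ((ξ * (M:ℝ)) • w + Lη.mulVec ηs + Lz.mulVec zs - y) + y := by abel
        _ = 0 + y := by rw [this]
        _ = y := zero_add y
  have step2 : ((ξ * (M:ℝ)) • w + rs = 0) ↔ ((ξ * (M:ℝ)) • ηs + Lηᵀ.mulVec rs = 0) := by
    constructor
    · intro h
      have := congrArg (Lηᵀ.mulVec) h
      rwa [Matrix.mulVec_add, Matrix.mulVec_smul, hw, Matrix.mulVec_zero] at this
    · intro h
      have := congrArg ((Lηᵀ)⁻¹.mulVec) h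
      rwa [Matrix.mulVec_add, Matrix.mulVec_smul, ← hwdef, Matrix.mulVec_mulVec,
        Matrix.nonsing_inv_mul _ hdetT, Matrix.one_mulVec, Matrix.mulVec_zero] at this
  constructor
  · rintro ⟨a1, a2⟩
    have hw0 : (ξ * (M:ℝ)) • w + rs = 0 := step2.2 a1
    have hrseq : rs = -((ξ * (M:ℝ)) • w) := by
      calc rs = (ξ * (M:ℝ)) • w + rs - (ξ * (M:ℝ)) • w := by abel
        _ = 0 - (ξ * (M:ℝ)) • w := by rw [hw0]
        _ = -((ξ * (M:ℝ)) • w) := by abel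
    constructor
    · exact step1.2 hw0
    · have := congrArg (Lzᵀ.mulVec) hrseq
      rw [a2, Matrix.mulVec_neg, Matrix.mulVec_smul] at this
      have h3 : (ξ * (M:ℝ)) • Lzᵀ.mulVec w = 0 := by
        rw [← neg_eq_zero, ← this]
      rcases smul_eq_zero.1 h3 with h | h
      · exact absurd h hc
      · exact h
  · rintro ⟨e1, e2⟩
    have hw0 : (ξ * (M:ℝ)) • w + rs = 0 := step1.1 e1
    refine ⟨step2.1 hw0, ?_⟩
    have hrseq : rs = -((ξ * (M:ℝ)) • w) := by
      calc rs = (ξ * (M:ℝ)) • w + rs - (ξ * (M:ℝ)) • w := by abel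
        _ = 0 - (ξ * (M:ℝ)) • w := by rw [hw0]
        _ = -((ξ * (M:ℝ)) • w) := by abel
    rw [hrseq, Matrix.mulVec_neg, Matrix.mulVec_smul, e2, smul_zero, neg_zero]
end

section
/- Let X be a real Hilbert space, U_M ⊂ X a finite-dimensional subspace, and ℓ_1,…,ℓ_M ∈ X' unisolvent on U_M. Let I_M be the interpolation operator onto U_M and W_M = span{R_X ℓ_m}_{m=1}^M. Then the operator norm of I_M equals the reciprocal of the inf-sup constant γ_M = inf_{w ∈ U_M, w≠0} sup_{v ∈ W_M, v≠0} (w,v)/(‖w‖‖v‖); that is, ‖I_M‖_{L(X)} = 1/γ_M. -/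
/-!
Let `P` be the orthogonal projection onto `W_M`. The inner supremum is attained at `v = P w`, so
`γ_M = inf_{w ∈ U_M} ‖P w‖ / ‖w‖`. Since `W_Mᗮ = ⋂ ker ℓ_m`, `P x` depends only on the values
`ℓ_m x`; hence `P ∘ I_M = P`, and `I_M (P w) = w` for `w ∈ U_M` by unisolvence. The first identity
gives `‖P (I_M x)‖ ≤ ‖x‖`, i.e. `γ_M ‖I_M‖ ≤ 1`, and the second gives `‖w‖ ≤ ‖I_M‖ ‖P w‖`,
i.e. `γ_M ‖I_M‖ ≥ 1`.
-/

open RealInnerProductSpace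

theorem Submodule.sSup_inner_div_norm_mul_norm_eq_norm_starProjection_div {X : Type*}
    [NormedAddCommGroup X] [InnerProductSpace ℝ X] (K : Submodule ℝ X) [K.HasOrthogonalProjection] {w : X}
    (hw : K.starProjection w ≠ 0) :
    sSup {s : ℝ | ∃ v ∈ K, v ≠ 0 ∧ s = ⟪w, v⟫ / (‖w‖ * ‖v‖)} =
      ‖K.starProjection w‖ / ‖w‖ := by
  have hw₀ : w ≠ 0 := by rintro rfl; simp at hw
  have inner_eq : ∀ v ∈ K, ⟪w, v⟫ = ⟪K.starProjection w, v⟫ := fun v hv => by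
    rw [K.inner_starProjection_left_eq_right, K.starProjection_eq_self_iff.mpr hv]
  refine IsGreatest.csSup_eq ⟨⟨_, K.starProjection_apply_mem w, hw, ?_⟩, ?_⟩
  · rw [inner_eq _ (K.starProjection_apply_mem w), real_inner_self_eq_norm_mul_norm]
    field_simp
  · rintro _ ⟨v, hv, hv₀, rfl⟩
    rw [inner_eq v hv, div_le_div_iff₀ (by positivity) (by positivity)]
    calc ⟪K.starProjection w, v⟫ * ‖w‖ ≤ ‖K.starProjection w‖ * ‖v‖ * ‖w‖ := by
          gcongr; exact real_inner_le_norm _ _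
      _ = ‖K.starProjection w‖ * (‖w‖ * ‖v‖) := by ring

theorem Submodule.starProjection_eq_starProjection_iff {X : Type*} [NormedAddCommGroup X]
    [InnerProductSpace ℝ X] (K : Submodule ℝ X) [K.HasOrthogonalProjection] {x y : X} :
    K.starProjection x = K.starProjection y ↔ x - y ∈ Kᗮ := by
  rw [← sub_eq_zero, ← map_sub, starProjection_apply_eq_zero_iff]

/-- When `U = {0}` both sides are junk values: `sInf ∅ = 0` and `‖0‖⁻¹ = 0`. -/
theorem sInf_div_norm_eq_inv_opNorm {𝕜 E F : Type*} [NontriviallyNormedField 𝕜]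
    [NormedAddCommGroup E] [NormedSpace 𝕜 E] [NormedAddCommGroup F] [NormedSpace 𝕜 F]
    (I : E →L[𝕜] F) (U : Set F) (q : F → ℝ) (hIU : ∀ x, I x ∈ U)
    (hq : ∀ x, q (I x) ≤ ‖x‖) (hlift : ∀ w ∈ U, ∃ x, I x = w ∧ ‖x‖ ≤ q w) :
    sInf {r : ℝ | ∃ w ∈ U, w ≠ 0 ∧ r = q w / ‖w‖} = ‖I‖⁻¹ := by
  set S := {r : ℝ | ∃ w ∈ U, w ≠ 0 ∧ r = q w / ‖w‖}
  rcases S.eq_empty_or_nonempty with hS | ⟨_, w, hw, hw₀, rfl⟩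
  · have hI : I = 0 := by
      ext x
      by_contra hx
      exact hS.subset ⟨I x, hIU x, hx, rfl⟩
    rw [hS, Real.sInf_empty, hI, norm_zero, inv_zero]
  have hIpos : 0 < ‖I‖ := by
    obtain ⟨x, rfl, -⟩ := hlift w hw
    exact norm_pos_iff.mpr (by rintro rfl; exact hw₀ rfl)
  have lower : ∀ r ∈ S, ‖I‖⁻¹ ≤ r := by
    rintro _ ⟨w, hw, hw₀, rfl⟩
    obtain ⟨x, rfl, hx⟩ := hlift w hw
    rw [le_div_iff₀ (norm_pos_iff.mpr hw₀), inv_mul_le_iff₀ hIpos]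
    exact (I.le_opNorm x).trans (by gcongr)
  refine IsGLB.csInf_eq ⟨lower, fun c hc => ?_⟩ ⟨_, w, hw, hw₀, rfl⟩
  rcases le_or_gt c 0 with hc₀ | hc₀
  · exact hc₀.trans (by positivity)
  rw [le_inv_comm₀ hc₀ hIpos]
  refine I.opNorm_le_bound (by positivity) fun x => ?_
  rcases eq_or_ne (I x) 0 with hx | hx
  · rw [hx, norm_zero]
    positivity
  have hcx : c ≤ q (I x) / ‖I x‖ := hc ⟨I x, hIU x, hx, rfl⟩
  rw [inv_mul_eq_div, le_div_iff₀ hc₀]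
  calc ‖I x‖ * c ≤ q (I x) := (le_div_iff₀' (norm_pos_iff.mpr hx)).mp hcx
    _ ≤ ‖x‖ := hq x

section RieszSpan

variable {X ι : Type*} [NormedAddCommGroup X] [InnerProductSpace ℝ X] [CompleteSpace X]

def rieszSpan (ℓ : ι → X →L[ℝ] ℝ) : Submodule ℝ X :=
  Submodule.span ℝ (Set.range fun m => (InnerProductSpace.toDual ℝ X).symm (ℓ m))

instance [Finite ι] (ℓ : ι → X →L[ℝ] ℝ) : FiniteDimensional ℝ (rieszSpan ℓ) :=
  FiniteDimensional.span_of_finite ℝ (Set.finite_range _)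

theorem mem_orthogonal_rieszSpan_iff (ℓ : ι → X →L[ℝ] ℝ) (x : X) :
    x ∈ (rieszSpan ℓ)ᗮ ↔ ∀ m, ℓ m x = 0 := by
  rw [rieszSpan, ← Submodule.span_singleton_le_iff_mem, ← Submodule.isOrtho_iff_le,
    Submodule.isOrtho_comm, Submodule.isOrtho_span]
  simp [InnerProductSpace.toDual_symm_apply]

theorem starProjection_rieszSpan_eq_iff [Finite ι] (ℓ : ι → X →L[ℝ] ℝ) {x y : X} :
    (rieszSpan ℓ).starProjection x = (rieszSpan ℓ).starProjection y ↔ ∀ m, ℓ m x = ℓ m y := by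
  simp only [Submodule.starProjection_eq_starProjection_iff, mem_orthogonal_rieszSpan_iff,
    map_sub, sub_eq_zero]

end RieszSpan

theorem eq_of_mem_of_forall_apply_eq {R X Y F ι : Type*} [Ring R] [AddCommGroup X]
    [Module R X] [AddCommGroup Y] [FunLike F X Y] [AddMonoidHomClass F X Y]
    {U : Submodule R X} {ℓ : ι → F} (huni : ∀ ψ ∈ U, (∀ m, ℓ m ψ = 0) → ψ = 0)
    {u v : X} (hu : u ∈ U) (hv : v ∈ U) (h : ∀ m, ℓ m u = ℓ m v) : u = v :=
  sub_eq_zero.mp <| huni _ (U.sub_mem hu hv) fun m => by rw [map_sub, h, sub_self]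

theorem stmt_19_general {X : Type*} [NormedAddCommGroup X] [InnerProductSpace ℝ X] [CompleteSpace X]
    {M : ℕ} (U : Submodule ℝ X)
    (ℓ : Fin M → (X →L[ℝ] ℝ))
    (huni : ∀ ψ ∈ U, (∀ m, ℓ m ψ = 0) → ψ = 0)
    (W : Submodule ℝ X)
    (hW : W = Submodule.span ℝ
      (Set.range fun m => (InnerProductSpace.toDual ℝ X).symm (ℓ m)))
    (I : X →L[ℝ] X)
    (hIU : ∀ u : X, I u ∈ U)
    (hI : ∀ (u : X) (m : Fin M), ℓ m (I u) = ℓ m u) :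
    ‖I‖ = 1 / sInf {r : ℝ | ∃ w ∈ U, w ≠ 0 ∧
      r = sSup {s : ℝ | ∃ v ∈ W, v ≠ 0 ∧ s = ⟪w, v⟫ / (‖w‖ * ‖v‖)}} := by
  change W = rieszSpan ℓ at hW
  subst hW
  set P := (rieszSpan ℓ).starProjection
  have hPI (x : X) : P (I x) = P x := (starProjection_rieszSpan_eq_iff ℓ).mpr (hI x)
  have hIP (w : X) (hw : w ∈ U) : I (P w) = w :=
    eq_of_mem_of_forall_apply_eq huni (hIU _) hw fun m => by
      rw [hI]
      exact (starProjection_rieszSpan_eq_iff ℓ).mp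
        (Submodule.starProjection_eq_self_iff.mpr (Submodule.starProjection_apply_mem _ w)) m
  have hP₀ (w : X) (hw : w ∈ U) (hw₀ : w ≠ 0) : P w ≠ 0 := fun h =>
    hw₀ <| huni w hw fun m => by
      simpa using (starProjection_rieszSpan_eq_iff ℓ (y := 0)).mp (by rw [h, map_zero]) m
  have hγ : {r : ℝ | ∃ w ∈ U, w ≠ 0 ∧
      r = sSup {s : ℝ | ∃ v ∈ rieszSpan ℓ, v ≠ 0 ∧ s = ⟪w, v⟫ / (‖w‖ * ‖v‖)}} =
      {r : ℝ | ∃ w ∈ U, w ≠ 0 ∧ r = ‖P w‖ / ‖w‖} := by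
    ext r
    refine exists_congr fun w => and_congr_right fun hw => and_congr_right fun hw₀ => ?_
    rw [Submodule.sSup_inner_div_norm_mul_norm_eq_norm_starProjection_div _ (hP₀ w hw hw₀)]
  have hγI : sInf {r : ℝ | ∃ w ∈ U, w ≠ 0 ∧ r = ‖P w‖ / ‖w‖} = ‖I‖⁻¹ :=
    sInf_div_norm_eq_inv_opNorm I U (fun w => ‖P w‖) hIU
      (fun x => hPI x ▸ Submodule.norm_starProjection_apply_le _ x)
      (fun w hw => ⟨P w, hIP w hw, le_rfl⟩)
  rw [hγ, hγI, one_div, inv_inv]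

/-- the operator norm of the interpolation operator (the Lebesgue constant)
equals the reciprocal of the inf-sup constant `γ_M`. -/
theorem stmt_19 {X : Type*} [NormedAddCommGroup X] [InnerProductSpace ℝ X] [CompleteSpace X]
    {M : ℕ} (U : Submodule ℝ X) [FiniteDimensional ℝ U]
    (hUdim : Module.finrank ℝ U = M)
    (ℓ : Fin M → (X →L[ℝ] ℝ)) (hli : LinearIndependent ℝ ℓ)
    (huni : ∀ ψ ∈ U, (∀ m, ℓ m ψ = 0) → ψ = 0)
    (W : Submodule ℝ X)
    (hW : W = Submodule.span ℝ
      (Set.range fun m => (InnerProductSpace.toDual ℝ X).symm (ℓ m)))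
    (I : X →L[ℝ] X)
    (hIU : ∀ u : X, I u ∈ U)
    (hI : ∀ (u : X) (m : Fin M), ℓ m (I u) = ℓ m u) :
    ‖I‖ = 1 / sInf {r : ℝ | ∃ w ∈ U, w ≠ 0 ∧
      r = sSup {s : ℝ | ∃ v ∈ W, v ≠ 0 ∧ s = ⟪w, v⟫ / (‖w‖ * ‖v‖)}} :=
  stmt_19_general U ℓ huni W hW I hIU hI
end
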